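/- Let r = 2q+1 with q ≥ 3. Write e_2 = Σ_{1≤i<j≤r} x_i x_j. If f = Σ b_{ij} x_i x_j (i < j) is a quadratic form with b_{12} = 0 and b_{13} ≠ 0, then the product (x_2 - x_3)(x_4 - x_5)···(x_{r-1} - x_r) · f does not lie in the ideal (x_1^2,...,x_r^2); in particular its expansion contains the squarefree monomial x_1 x_2 x_3 x_4 x_6 ··· x_{2q} with nonzero coefficient b_{13}. -/

import Mathlib

/-!
Expand `∏ₖ (x_{2k+1} - x_{2k+2})` and read off the coefficient of the squarefree monomial
`m = x_0 x_1 x_2 x_3 x_5 ⋯ x_{2q-1}` (variables indexed from `0`). For `k ≥ 1` only `x_{2k+1}`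
divides `m`, so those factors must contribute `x_{2k+1}`; this leaves `x_0 x_1 x_2` to be produced
by `(x_1 - x_2) f`, whose coefficient there is `b_{02} - b_{01} = b_{02}`. Every element of
`(x_0^2, …, x_{2q}^2)` has zero coefficient at a squarefree monomial.
-/

open MvPolynomial Finset

theorem Finsupp.finsetSum_single_one_apply {σ : Type*} [DecidableEq σ] (S : Finset σ) (a : σ) :
    (∑ i ∈ S, Finsupp.single i 1 : σ →₀ ℕ) a = if a ∈ S then 1 else 0 := by
  simp [Finsupp.finsetSum_apply, Finsupp.single_apply]

namespace MvPolynomial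

variable {σ R : Type*}

section CommSemiring

variable [CommSemiring R]

theorem coeff_eq_zero_of_mem_span_X_sq {g : MvPolynomial σ R}
    (hg : g ∈ Ideal.span (Set.range fun i : σ => (X i : MvPolynomial σ R) ^ 2))
    {μ : σ →₀ ℕ} (hμ : ∀ i, μ i ≤ 1) : coeff μ g = 0 := by
  have hspan : Set.range (fun i : σ => (X i : MvPolynomial σ R) ^ 2) =
      (fun s => monomial s (1 : R)) '' Set.range fun i => Finsupp.single i 2 := by
    simp only [← Set.range_comp, Function.comp_def, X_pow_eq_monomial]
  rw [hspan, mem_ideal_span_monomial_image] at hg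
  by_contra hμg
  obtain ⟨_, ⟨i, rfl⟩, hle⟩ := hg μ (mem_support_iff.mpr hμg)
  have := hμ i
  rw [Finsupp.single_le_iff] at hle
  omega

theorem X_mul_X_eq_monomial (i j : σ) :
    (X i * X j : MvPolynomial σ R) = monomial (Finsupp.single i 1 + Finsupp.single j 1) 1 := by
  rw [X, X, monomial_mul, one_mul]

theorem coeff_single_add_single_sum_smul_X_mul_X [Fintype σ] [LinearOrder σ] (b : σ → σ → R)
    {i j : σ} (hij : i < j) :
    coeff (Finsupp.single i 1 + Finsupp.single j 1)
      (∑ p ∈ univ.filter (fun p : σ × σ => p.1 < p.2), b p.1 p.2 • (X p.1 * X p.2)) = b i j := by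
  rw [coeff_sum, sum_eq_single_of_mem (i, j) (by simpa using hij)]
  · rw [coeff_smul, X_mul_X_eq_monomial, coeff_monomial, if_pos rfl, smul_eq_mul, mul_one]
  · rintro ⟨k, l⟩ hkl hne
    rw [coeff_smul, X_mul_X_eq_monomial, coeff_monomial, if_neg, smul_zero]
    rw [Finsupp.single_add_single_eq_single_add_single one_ne_zero one_ne_zero]
    simp only [mem_filter, mem_univ, true_and] at hkl
    rintro (⟨rfl, rfl⟩ | ⟨-, rfl, rfl⟩ | ⟨h, -⟩)
    · exact hne rfl
    · exact lt_asymm hij hkl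
    · exact two_ne_zero h

variable [DecidableEq σ] {S : Finset σ} {a : σ}

theorem coeff_sum_single_X_mul (ha : a ∈ S) (g : MvPolynomial σ R) :
    coeff (∑ i ∈ S, Finsupp.single i 1) (X a * g) =
      coeff (∑ i ∈ S.erase a, Finsupp.single i 1) g := by
  rw [coeff_X_mul', if_pos, ← sum_erase_add S _ ha, add_tsub_cancel_right]
  simp [Finsupp.finsetSum_single_one_apply, ha]

theorem coeff_sum_single_X_mul_of_notMem (ha : a ∉ S) (g : MvPolynomial σ R) :
    coeff (∑ i ∈ S, Finsupp.single i 1) (X a * g) = 0 := by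
  rw [coeff_X_mul', if_neg]
  simp [Finsupp.finsetSum_single_one_apply, ha]

end CommSemiring

theorem coeff_sum_single_prod_X_sub_X_mul [CommRing R] [DecidableEq σ] {ι : Type*}
    [DecidableEq ι] (s : Finset ι) (a b : ι → σ) (ha : Set.InjOn a s) (S : Finset σ)
    (haS : ∀ k ∈ s, a k ∈ S) (hbS : ∀ k ∈ s, b k ∉ S) (g : MvPolynomial σ R) :
    coeff (∑ i ∈ S, Finsupp.single i 1) ((∏ k ∈ s, (X (a k) - X (b k))) * g) =
      coeff (∑ i ∈ S \ s.image a, Finsupp.single i 1) g := by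
  induction s using Finset.induction_on generalizing S with
  | empty => simp
  | insert k s hk ih =>
    rw [prod_insert hk, mul_assoc, sub_mul, coeff_sub,
      coeff_sum_single_X_mul (haS k (mem_insert_self k s)),
      coeff_sum_single_X_mul_of_notMem (hbS k (mem_insert_self k s)), sub_zero,
      ih (ha.mono (by simp)) _ ?_ ?_, image_insert, sdiff_insert, erase_sdiff_comm]
    · intro k' hk'
      refine mem_erase.mpr ⟨fun h => hk ?_, haS k' (mem_insert_of_mem hk')⟩
      rwa [← ha (mem_insert_of_mem hk') (mem_insert_self k s) h]
    · exact fun k' hk' h => hbS k' (mem_insert_of_mem hk') (mem_of_mem_erase h)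

end MvPolynomial

section

variable {K : Type*} [CommRing K] {q : ℕ}

def oddVar (q : ℕ) (k : Fin q) : Fin (2 * q + 1) := ⟨2 * k.1 + 1, by omega⟩

def evenVar (q : ℕ) (k : Fin q) : Fin (2 * q + 1) := ⟨2 * k.1 + 2, by omega⟩

@[simp]
theorem val_oddVar (k : Fin q) : (oddVar q k).1 = 2 * k.1 + 1 := rfl

@[simp]
theorem val_evenVar (k : Fin q) : (evenVar q k).1 = 2 * k.1 + 2 := rfl

def witnessSupport (q : ℕ) (hq : 1 ≤ q) : Finset (Fin (2 * q + 1)) :=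
  ({⟨0, by omega⟩, ⟨1, by omega⟩, ⟨2, by omega⟩} : Finset (Fin (2 * q + 1))) ∪
    image (fun j : Fin (q - 1) => (⟨2 * j.1 + 3, by omega⟩ : Fin (2 * q + 1))) univ

theorem mem_witnessSupport (hq : 1 ≤ q) (v : Fin (2 * q + 1)) :
    v ∈ witnessSupport q hq ↔ v.1 ≤ 2 ∨ v.1 % 2 = 1 := by
  simp only [witnessSupport, mem_union, mem_insert, mem_singleton, mem_image, mem_univ, true_and,
    Fin.ext_iff]
  constructor
  · rintro ((h | h | h) | ⟨j, hj⟩) <;> omega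
  · intro h
    by_cases h3 : v.1 < 3
    · omega
    · exact Or.inr ⟨⟨(v.1 - 3) / 2, by omega⟩, by simp only; omega⟩

theorem oddVar_injective : Function.Injective (oddVar q) := fun k l h => by
  simpa [Fin.ext_iff] using h

theorem witnessSupport_sdiff_image_oddVar (hq : 1 ≤ q) :
    witnessSupport q hq \ (univ.erase ⟨0, hq⟩).image (oddVar q) =
      {⟨0, by omega⟩, ⟨1, by omega⟩, ⟨2, by omega⟩} := by
  ext v
  simp only [mem_sdiff, mem_witnessSupport, mem_image, mem_erase, mem_univ, and_true, mem_insert,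
    mem_singleton, val_oddVar, Fin.ext_iff, ne_eq]
  constructor
  · rintro ⟨h, hv⟩
    by_contra
    exact hv ⟨⟨(v.1 - 1) / 2, by omega⟩, by simp only; omega, by simp only; omega⟩
  · rintro (h | h | h) <;> refine ⟨by omega, ?_⟩ <;> rintro ⟨k, hk, hkv⟩ <;> omega

theorem coeff_witnessSupport_prod_mul (hq : 1 ≤ q) (f : MvPolynomial (Fin (2 * q + 1)) K) :
    coeff (∑ i ∈ witnessSupport q hq, Finsupp.single i 1)
        ((∏ k : Fin q, (X (oddVar q k) - X (evenVar q k))) * f) =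
      coeff (Finsupp.single ⟨0, by omega⟩ 1 + Finsupp.single ⟨2, by omega⟩ 1) f -
        coeff (Finsupp.single ⟨0, by omega⟩ 1 + Finsupp.single ⟨1, by omega⟩ 1) f := by
  let k₀ : Fin q := ⟨0, hq⟩
  have hodd : ∀ k ∈ univ.erase k₀, oddVar q k ∈ witnessSupport q hq := fun k _ => by
    simp [mem_witnessSupport]
  have heven : ∀ k ∈ univ.erase k₀, evenVar q k ∉ witnessSupport q hq := fun k hk => by
    simp only [mem_erase, mem_univ, and_true, ne_eq, k₀, Fin.ext_iff] at hk
    simp only [mem_witnessSupport, val_evenVar]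
    omega
  have h02 : ({⟨0, by omega⟩, ⟨1, by omega⟩, ⟨2, by omega⟩} : Finset (Fin (2 * q + 1))).erase
      (oddVar q k₀) = {⟨0, by omega⟩, ⟨2, by omega⟩} := by
    ext v
    simp only [k₀, mem_erase, ne_eq, mem_insert, mem_singleton, Fin.ext_iff, val_oddVar]
    omega
  have h01 : ({⟨0, by omega⟩, ⟨1, by omega⟩, ⟨2, by omega⟩} : Finset (Fin (2 * q + 1))).erase
      (evenVar q k₀) = {⟨0, by omega⟩, ⟨1, by omega⟩} := by
    ext v
    simp only [k₀, mem_erase, ne_eq, mem_insert, mem_singleton, Fin.ext_iff, val_evenVar]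
    omega
  rw [← mul_prod_erase univ _ (mem_univ k₀), mul_comm (X _ - X _), mul_assoc,
    coeff_sum_single_prod_X_sub_X_mul _ _ _ oddVar_injective.injOn _ hodd heven,
    witnessSupport_sdiff_image_oddVar, sub_mul, coeff_sub,
    coeff_sum_single_X_mul (by simp [k₀, Fin.ext_iff]), h02,
    coeff_sum_single_X_mul (by simp [k₀, Fin.ext_iff]), h01,
    sum_pair (by simp [Fin.ext_iff]), sum_pair (by simp [Fin.ext_iff])]

end

theorem stmt18 (K : Type*) [Field K] (q : ℕ) (hq : 3 ≤ q)
    (b : Fin (2 * q + 1) → Fin (2 * q + 1) → K)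
    (hb12 : b ⟨0, by omega⟩ ⟨1, by omega⟩ = 0)
    (hb13 : b ⟨0, by omega⟩ ⟨2, by omega⟩ ≠ 0)
    (f : MvPolynomial (Fin (2 * q + 1)) K)
    (hf : f = ∑ p ∈ Finset.univ.filter (fun p : Fin (2 * q + 1) × Fin (2 * q + 1) => p.1 < p.2),
      b p.1 p.2 • (X p.1 * X p.2)) :
    (∏ k : Fin q,
        ((X (⟨2 * k.1 + 1, by have := k.2; omega⟩ : Fin (2 * q + 1)) :
            MvPolynomial (Fin (2 * q + 1)) K) -
          X (⟨2 * k.1 + 2, by have := k.2; omega⟩ : Fin (2 * q + 1)))) * f ∉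
      Ideal.span (Set.range fun i : Fin (2 * q + 1) =>
        (X i : MvPolynomial (Fin (2 * q + 1)) K) ^ 2) ∧
    MvPolynomial.coeff
        (∑ i ∈ (({⟨0, by omega⟩, ⟨1, by omega⟩, ⟨2, by omega⟩} : Finset (Fin (2 * q + 1))) ∪
            Finset.image (fun j : Fin (q - 1) =>
              (⟨2 * j.1 + 3, by have := j.2; omega⟩ : Fin (2 * q + 1))) Finset.univ),
          Finsupp.single i 1)
        ((∏ k : Fin q,
            ((X (⟨2 * k.1 + 1, by have := k.2; omega⟩ : Fin (2 * q + 1)) :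
                MvPolynomial (Fin (2 * q + 1)) K) -
              X (⟨2 * k.1 + 2, by have := k.2; omega⟩ : Fin (2 * q + 1)))) * f) =
      b ⟨0, by omega⟩ ⟨2, by omega⟩ := by
  have hquad : ∀ {i j}, i < j → coeff (Finsupp.single i 1 + Finsupp.single j 1) f = b i j :=
    fun hij => hf ▸ coeff_single_add_single_sum_smul_X_mul_X b hij
  have hcoeff := coeff_witnessSupport_prod_mul (by omega : 1 ≤ q) f
  rw [hquad (by simp [Fin.lt_def]), hquad (by simp [Fin.lt_def]), hb12, sub_zero] at hcoeff
  refine ⟨fun hmem => hb13 ?_, hcoeff⟩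
  rw [← hcoeff]
  refine coeff_eq_zero_of_mem_span_X_sq hmem fun v => ?_
  rw [Finsupp.finsetSum_single_one_apply]
  split_ifs <;> omega
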